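/- Let k be an algebraically closed field, and let φ : V × W → U be a bilinear map of finite-dimensional k-vector spaces such that φ(v, w) = 0 implies v = 0 or w = 0 (i.e., φ is nondegenerate in the sense of the bilinear map lemma). If V and W are nonzero, then dim_k U ≥ dim_k V + dim_k W − 1. -/

import Mathlib

open Module MvPolynomial Finsupp

namespace BML

variable {k : Type*} [Field k]
variable {n m : ℕ}

/-- component extraction through multiplication by a weighted-homogeneous factor -/
theorem whc_mul {σ M : Type*} [AddCancelCommMonoid M] [DecidableEq M] (w : σ → M)
    {F G : MvPolynomial σ k} {a : M} (hF : F.IsWeightedHomogeneous w a) (b : M) :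
    weightedHomogeneousComponent w (a + b) (F * G)
      = F * weightedHomogeneousComponent w b G := by
  classical
  ext d
  rw [coeff_weightedHomogeneousComponent, coeff_mul, coeff_mul]
  by_cases hd : weight w d = a + b
  · rw [if_pos hd]
    refine Finset.sum_congr rfl ?_
    rintro ⟨u, v⟩ huv
    rw [Finset.HasAntidiagonal.mem_antidiagonal] at huv
    by_cases hu : coeff u F = 0
    · simp [hu]
    · have hwu : weight w u = a := hF hu
      have hv : weight w v = b := by
        have : weight w u + weight w v = a + b := by
          rw [← map_add, huv, hd]
        rw [hwu] at this
        exact add_left_cancel this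
      rw [coeff_weightedHomogeneousComponent, if_pos hv]
  · rw [if_neg hd]
    refine (Finset.sum_eq_zero ?_).symm
    rintro ⟨u, v⟩ huv
    rw [Finset.HasAntidiagonal.mem_antidiagonal] at huv
    by_cases hu : coeff u F = 0
    · simp [hu]
    · have hwu : weight w u = a := hF hu
      rw [coeff_weightedHomogeneousComponent]
      rw [if_neg, mul_zero]
      intro hv
      exact hd (by rw [← huv, map_add, hwu, hv])

/-- bidegree weight on `Fin n ⊕ Fin m` -/
def wt (n m : ℕ) : Fin n ⊕ Fin m → ℕ × ℕ := Sum.elim (fun _ => (1, 0)) (fun _ => (0, 1))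

theorem weight_wt (μ : Fin n ⊕ Fin m →₀ ℕ) :
    weight (wt n m) μ = (∑ i, μ (Sum.inl i), ∑ j, μ (Sum.inr j)) := by
  classical
  rw [weight_apply, Finsupp.sum_fintype _ _ (by intro a; simp)]
  rw [Fintype.sum_sum_type]
  apply Prod.ext <;>
    simp [wt, Prod.fst_sum, Prod.snd_sum, smul_eq_mul, Prod.ext_iff]

theorem pigeon {N : ℕ} {f : Fin n → ℕ} (hn : 0 < n) (h : N * n ≤ ∑ i, f i) :
    ∃ i, N ≤ f i := by
  by_contra hc
  push_neg at hc
  rcases Nat.eq_zero_or_pos N with hN | hN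
  · exact absurd (hc ⟨0, hn⟩) (by omega)
  have h1 : ∑ i, f i ≤ ∑ _i : Fin n, (N - 1) :=
    Finset.sum_le_sum fun i _ => Nat.le_sub_one_of_lt (hc i)
  simp only [Finset.sum_const, Finset.card_univ, Fintype.card_fin, smul_eq_mul] at h1
  have h2 : N * n ≤ n * (N - 1) := le_trans h h1
  have h3 : n * (N - 1) < n * N :=
    (Nat.mul_lt_mul_left hn).mpr (Nat.sub_lt hN Nat.one_pos)
  rw [mul_comm] at h2
  exact absurd (lt_of_le_of_lt h2 h3) (lt_irrefl _)

theorem card_le_of_span {V : Type*} [AddCommGroup V] [Module k V] {ι : Type*} [Fintype ι]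
    {v : ι → V} (hv : LinearIndependent k v) (T : Finset V)
    (hsub : ∀ i, v i ∈ Submodule.span k (T : Set V)) :
    Fintype.card ι ≤ T.card := by
  set S := Submodule.span k (T : Set V)
  haveI : FiniteDimensional k S := FiniteDimensional.span_of_finite k T.finite_toSet
  have hv' : LinearIndependent k (fun i => (⟨v i, hsub i⟩ : S)) := by
    apply LinearIndependent.of_comp S.subtype
    convert hv
    rfl
  calc Fintype.card ι ≤ finrank k S := hv'.fintype_card_le_finrank
    _ ≤ T.card := finrank_span_finset_le_card T

theorem prod_pow_succ {d : ℕ} (F : Fin d → MvPolynomial (Fin n ⊕ Fin m) k)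
    (γ : Fin d → ℕ) (l : Fin d) :
    (∏ l', F l' ^ ((γ + Pi.single l 1 : Fin d → ℕ)) l') = F l * ∏ l', F l' ^ γ l' := by
  classical
  simp only [Pi.add_apply, pow_add, Finset.prod_mul_distrib]
  rw [mul_comm]
  congr 1
  have : ∀ l', F l' ^ Pi.single (M := fun _ => ℕ) l 1 l' = if l' = l then F l' else 1 := by
    intro l'
    rcases eq_or_ne l' l with h | h
    · subst h; simp
    · simp [Pi.single_apply, h]
  rw [Finset.prod_congr rfl fun l' _ => this l']
  simp

/-- The span claim: balanced monomials of bidegree `(E0+s, E0+s)` lie in the span of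
products `F^γ * (balanced monomial of bidegree (E0,E0))` with `∑ γ = s`. -/
theorem span_claim {d : ℕ} (hn : 0 < n) (hm : 0 < m)
    (F : Fin d → MvPolynomial (Fin n ⊕ Fin m) k)
    (hF : ∀ l, (F l).IsWeightedHomogeneous (wt n m) (1, 1))
    (N E0 : ℕ) (hE0n : N * n ≤ E0) (hE0m : N * m ≤ E0)
    (hmem : ∀ i j, (X (Sum.inl i) * X (Sum.inr j)) ^ N ∈ Ideal.span (Set.range F)) :
    ∀ s (μ : Fin n ⊕ Fin m →₀ ℕ), weight (wt n m) μ = (E0 + s, E0 + s) →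
      monomial μ (1 : k) ∈ Submodule.span k
        {p | ∃ γ : Fin d → ℕ, (∑ l, γ l) = s ∧ ∃ ν : Fin n ⊕ Fin m →₀ ℕ,
          weight (wt n m) ν = (E0, E0) ∧ p = (∏ l, F l ^ γ l) * monomial ν 1} := by
  classical
  intro s
  induction s with
  | zero =>
      intro μ hμ
      apply Submodule.subset_span
      exact ⟨0, by simp, μ, by simpa using hμ, by simp⟩
  | succ s IH =>
      intro μ hμ
      rw [weight_wt] at hμ
      have hμ1 : (∑ i, μ (Sum.inl i)) = E0 + (s + 1) := (Prod.mk.injEq _ _ _ _ ▸ hμ : _ ∧ _).1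
      have hμ2 : (∑ j, μ (Sum.inr j)) = E0 + (s + 1) := (Prod.mk.injEq _ _ _ _ ▸ hμ : _ ∧ _).2
      obtain ⟨i0, hi0⟩ : ∃ i, N ≤ μ (Sum.inl i) := pigeon hn (by omega)
      obtain ⟨j0, hj0⟩ : ∃ j, N ≤ μ (Sum.inr j) := pigeon hm (by omega)
      set δ : Fin n ⊕ Fin m →₀ ℕ :=
        Finsupp.single (Sum.inl i0) N + Finsupp.single (Sum.inr j0) N with hδ
      have hle : δ ≤ μ := by
        rw [Finsupp.le_def]
        intro a
        rcases a with i | j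
        · simp only [hδ, Finsupp.add_apply, Finsupp.single_apply]
          split_ifs with h1 h2 h2 <;> simp_all <;> omega
        · simp only [hδ, Finsupp.add_apply, Finsupp.single_apply]
          split_ifs with h1 h2 h2 <;> simp_all <;> omega
      set ν : Fin n ⊕ Fin m →₀ ℕ := μ - δ with hν
      have hrec : δ + ν = μ := by
        rw [hν, add_comm]
        exact tsub_add_cancel_of_le hle
      have hmono : monomial μ (1 : k) = (X (Sum.inl i0) * X (Sum.inr j0)) ^ N * monomial ν 1 := by
        rw [mul_pow, X_pow_eq_monomial, X_pow_eq_monomial, monomial_mul, monomial_mul]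
        rw [one_mul, one_mul, ← hδ, hrec]
      obtain ⟨G, hG⟩ := Ideal.mem_span_range_iff_exists_fun.mp (hmem i0 j0)
      have hsum : monomial μ (1 : k) = ∑ l, F l * (G l * monomial ν 1) := by
        rw [hmono, ← hG, Finset.sum_mul]
        exact Finset.sum_congr rfl fun l _ => by ring
      have hpair : ((1, 1) : ℕ × ℕ) + (E0 + s, E0 + s) = (E0 + (s + 1), E0 + (s + 1)) := by
        simp [Prod.ext_iff]; omega
      have hlhs : weightedHomogeneousComponent (wt n m) (((1, 1) : ℕ × ℕ) + (E0 + s, E0 + s))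
          (monomial μ (1 : k)) = monomial μ 1 := by
        rw [hpair]
        refine IsWeightedHomogeneous.weightedHomogeneousComponent_same ?_
        apply isWeightedHomogeneous_monomial
        rw [weight_wt]
        exact hμ
      have hrhs : ∀ l, weightedHomogeneousComponent (wt n m)
            (((1, 1) : ℕ × ℕ) + (E0 + s, E0 + s)) (F l * (G l * monomial ν 1))
          = F l * weightedHomogeneousComponent (wt n m) (E0 + s, E0 + s)
              (G l * monomial ν 1) :=
        fun l => whc_mul (wt n m) (hF l) _
      have happ : monomial μ (1 : k) = ∑ l, F l *
          weightedHomogeneousComponent (wt n m) (E0 + s, E0 + s) (G l * monomial ν 1) := by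
        conv_lhs => rw [← hlhs, hsum]
        rw [map_sum]
        exact Finset.sum_congr rfl fun l _ => hrhs l
      rw [happ]
      apply Submodule.sum_mem
      intro l _
      set H := weightedHomogeneousComponent (wt n m) (E0 + s, E0 + s) (G l * monomial ν 1)
        with hH
      have hHwt : H.IsWeightedHomogeneous (wt n m) (E0 + s, E0 + s) :=
        weightedHomogeneousComponent_isWeightedHomogeneous _ _
      rw [as_sum H, Finset.mul_sum]
      apply Submodule.sum_mem
      intro μ' hμ'
      have hμ'wt : weight (wt n m) μ' = (E0 + s, E0 + s) :=
        hHwt (MvPolynomial.mem_support_iff.mp hμ')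
      have hmem' : monomial μ' (1 : k) ∈ Submodule.span k
          {p | ∃ γ : Fin d → ℕ, (∑ l, γ l) = s ∧ ∃ ν' : Fin n ⊕ Fin m →₀ ℕ,
            weight (wt n m) ν' = (E0, E0) ∧ p = (∏ l, F l ^ γ l) * monomial ν' 1} :=
        IH μ' hμ'wt
      have hmap := Submodule.mem_map_of_mem (f := LinearMap.mulLeft k (F l)) hmem'
      rw [Submodule.map_span] at hmap
      have himg : (LinearMap.mulLeft k (F l)) ''
          {p | ∃ γ : Fin d → ℕ, (∑ l, γ l) = s ∧ ∃ ν' : Fin n ⊕ Fin m →₀ ℕ,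
            weight (wt n m) ν' = (E0, E0) ∧ p = (∏ l, F l ^ γ l) * monomial ν' 1}
          ⊆ {p | ∃ γ : Fin d → ℕ, (∑ l, γ l) = s + 1 ∧ ∃ ν' : Fin n ⊕ Fin m →₀ ℕ,
            weight (wt n m) ν' = (E0, E0) ∧ p = (∏ l, F l ^ γ l) * monomial ν' 1} := by
        rintro q ⟨p, ⟨γ, hγ, ν', hν', rfl⟩, rfl⟩
        refine ⟨γ + Pi.single l 1, ?_, ν', hν', ?_⟩
        · simp only [Pi.add_apply, Finset.sum_add_distrib, hγ]
          simp [Finset.sum_pi_single']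
        · simp only [LinearMap.mulLeft_apply, prod_pow_succ]
          ring
      have := Submodule.span_mono himg hmap
      -- monomial μ' c = c • monomial μ' 1 and pull scalars
      have hsm : F l * monomial μ' (coeff μ' H) = (coeff μ' H) •
          (LinearMap.mulLeft k (F l) (monomial μ' (1 : k))) := by
        simp only [LinearMap.mulLeft_apply]
        rw [← mul_smul_comm, smul_monomial, smul_eq_mul, mul_one]
      rw [hsm]
      exact Submodule.smul_mem _ _ this

theorem core {n m d : ℕ} (hn : 0 < n) (hm : 0 < m) (hd : 0 < d)
    (F : Fin d → MvPolynomial (Fin n ⊕ Fin m) k)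
    (hF : ∀ l, (F l).IsWeightedHomogeneous (wt n m) (1, 1))
    (N : ℕ)
    (hmem : ∀ i j, (X (Sum.inl i) * X (Sum.inr j)) ^ N ∈ Ideal.span (Set.range F)) :
    n + m - 1 ≤ d := by
  classical
  by_contra hcon
  push_neg at hcon
  obtain ⟨n', rfl⟩ : ∃ n', n = n' + 1 := ⟨n - 1, by omega⟩
  obtain ⟨m', rfl⟩ : ∃ m', m = m' + 1 := ⟨m - 1, by omega⟩
  obtain ⟨d', rfl⟩ : ∃ d', d = d' + 1 := ⟨d - 1, by omega⟩
  have hd' : d' < n' + m' := by omega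
  set E0 := N * (n' + 1 + (m' + 1)) with hE0
  set C := (n' + 1) ^ n' * (m' + 1) ^ m' * (E0 + 1) ^ (n' + m' + 2) with hC
  set s := C with hs
  set e := E0 + s with he
  set t := e / (n' + 1) with ht
  set t' := e / (m' + 1) with ht'
  -- the linearly independent family of balanced monomials of bidegree (e,e)
  have hsum_bound : ∀ {r : ℕ} (tt : ℕ) (a : Fin r → Fin (tt + 1)),
      (r + 1) * tt ≤ e → (∑ i', (a i' : ℕ)) ≤ e := by
    intro r tt a hre
    calc (∑ i', (a i' : ℕ)) ≤ ∑ _i' : Fin r, tt :=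
          Finset.sum_le_sum fun i _ => Fin.is_le _
      _ = r * tt := by simp [Finset.sum_const, mul_comm]
      _ ≤ (r + 1) * tt := Nat.mul_le_mul_right _ (by omega)
      _ ≤ e := hre
  have htle : (n' + 1) * t ≤ e := by rw [ht, mul_comm]; exact Nat.div_mul_le_self _ _
  have ht'le : (m' + 1) * t' ≤ e := by rw [ht', mul_comm]; exact Nat.div_mul_le_self _ _
  set expf : (Fin n' → Fin (t + 1)) × (Fin m' → Fin (t' + 1)) →
      (Fin (n' + 1) ⊕ Fin (m' + 1) →₀ ℕ) := fun ab =>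
    equivFunOnFinite.symm (Sum.elim
      (fun i => Fin.lastCases (e - ∑ i', (ab.1 i' : ℕ)) (fun i' => (ab.1 i' : ℕ)) i)
      (fun j => Fin.lastCases (e - ∑ j', (ab.2 j' : ℕ)) (fun j' => (ab.2 j' : ℕ)) j))
    with hexpf
  have hexpf_inl_cast : ∀ ab i', expf ab (Sum.inl (Fin.castSucc i')) = (ab.1 i' : ℕ) := by
    intro ab i'; simp [hexpf]
  have hexpf_inl_last : ∀ ab, expf ab (Sum.inl (Fin.last n')) = e - ∑ i', (ab.1 i' : ℕ) := by
    intro ab; simp [hexpf]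
  have hexpf_inr_cast : ∀ ab j', expf ab (Sum.inr (Fin.castSucc j')) = (ab.2 j' : ℕ) := by
    intro ab j'; simp [hexpf]
  have hexpf_inr_last : ∀ ab, expf ab (Sum.inr (Fin.last m')) = e - ∑ j', (ab.2 j' : ℕ) := by
    intro ab; simp [hexpf]
  have hwt : ∀ ab, weight (wt (n' + 1) (m' + 1)) (expf ab) = (e, e) := by
    intro ab
    rw [weight_wt]
    have h1 : (∑ i, expf ab (Sum.inl i)) = e := by
      rw [Fin.sum_univ_castSucc]
      simp only [hexpf_inl_cast, hexpf_inl_last]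
      have := hsum_bound t ab.1 (le_trans (Nat.mul_le_mul_right _ (by omega)) htle)
      omega
    have h2 : (∑ j, expf ab (Sum.inr j)) = e := by
      rw [Fin.sum_univ_castSucc]
      simp only [hexpf_inr_cast, hexpf_inr_last]
      have := hsum_bound t' ab.2 (le_trans (Nat.mul_le_mul_right _ (by omega)) ht'le)
      omega
    rw [h1, h2]
  have hinj : Function.Injective expf := by
    intro x y hxy
    have h1 : ∀ i', x.1 i' = y.1 i' := by
      intro i'
      have := congrArg (fun f => f (Sum.inl (Fin.castSucc i'))) hxy
      simp only [hexpf_inl_cast] at this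
      exact Fin.ext this
    have h2 : ∀ j', x.2 j' = y.2 j' := by
      intro j'
      have := congrArg (fun f => f (Sum.inr (Fin.castSucc j'))) hxy
      simp only [hexpf_inr_cast] at this
      exact Fin.ext this
    exact Prod.ext (funext h1) (funext h2)
  have hli : LinearIndependent k (fun ab => monomial (expf ab) (1 : k)) := by
    have hb := (basisMonomials (Fin (n' + 1) ⊕ Fin (m' + 1)) k).linearIndependent
    have := hb.comp expf hinj
    simp only [coe_basisMonomials] at this; exact this
  -- the spanning finset
  set gγ : (Fin d' → Fin (s + 1)) → (Fin (d' + 1) → ℕ) := fun c =>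
    Fin.lastCases (s - ∑ l', (c l' : ℕ)) (fun l' => (c l' : ℕ)) with hgγ
  set gν : (Fin (n' + 1) → Fin (E0 + 1)) × (Fin (m' + 1) → Fin (E0 + 1)) →
      (Fin (n' + 1) ⊕ Fin (m' + 1) →₀ ℕ) := fun p =>
    equivFunOnFinite.symm (Sum.elim (fun i => (p.1 i : ℕ)) (fun j => (p.2 j : ℕ))) with hgν
  set g : (Fin d' → Fin (s + 1)) ×
      ((Fin (n' + 1) → Fin (E0 + 1)) × (Fin (m' + 1) → Fin (E0 + 1))) →
      MvPolynomial (Fin (n' + 1) ⊕ Fin (m' + 1)) k := fun x =>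
    (∏ l, F l ^ gγ x.1 l) * monomial (gν x.2) 1 with hg
  set T := Finset.image g Finset.univ with hT
  have hcover : {p | ∃ γ : Fin (d' + 1) → ℕ, (∑ l, γ l) = s ∧
      ∃ ν : Fin (n' + 1) ⊕ Fin (m' + 1) →₀ ℕ,
        weight (wt (n' + 1) (m' + 1)) ν = (E0, E0) ∧
        p = (∏ l, F l ^ γ l) * monomial ν 1} ⊆ (T : Set _) := by
    rintro p ⟨γ, hγ, ν, hν, rfl⟩
    rw [weight_wt] at hν
    have hν1 : (∑ i, ν (Sum.inl i)) = E0 := (Prod.mk.injEq _ _ _ _ ▸ hν : _ ∧ _).1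
    have hν2 : (∑ j, ν (Sum.inr j)) = E0 := (Prod.mk.injEq _ _ _ _ ▸ hν : _ ∧ _).2
    have hγle : ∀ l, γ l ≤ s := by
      intro l
      rw [← hγ]
      exact Finset.single_le_sum (fun _ _ => Nat.zero_le _) (Finset.mem_univ l)
    have hνle1 : ∀ i, ν (Sum.inl i) ≤ E0 := by
      intro i
      rw [← hν1]
      exact Finset.single_le_sum (f := fun i => ν (Sum.inl i)) (fun _ _ => Nat.zero_le _)
        (Finset.mem_univ i)
    have hνle2 : ∀ j, ν (Sum.inr j) ≤ E0 := by
      intro j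
      rw [← hν2]
      exact Finset.single_le_sum (f := fun j => ν (Sum.inr j)) (fun _ _ => Nat.zero_le _)
        (Finset.mem_univ j)
    set c : Fin d' → Fin (s + 1) := fun l' =>
      ⟨γ (Fin.castSucc l'), Nat.lt_succ_of_le (hγle _)⟩ with hc
    set a : Fin (n' + 1) → Fin (E0 + 1) := fun i =>
      ⟨ν (Sum.inl i), Nat.lt_succ_of_le (hνle1 _)⟩ with ha
    set b : Fin (m' + 1) → Fin (E0 + 1) := fun j =>
      ⟨ν (Sum.inr j), Nat.lt_succ_of_le (hνle2 _)⟩ with hb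
    have hcval : ∀ l', (c l' : ℕ) = γ (Fin.castSucc l') := fun _ => rfl
    have hγeq : gγ c = γ := by
      funext l
      simp only [hgγ]
      refine Fin.lastCases ?_ ?_ l
      · rw [Fin.lastCases_last]
        have hs2 : (∑ l', (c l' : ℕ)) = ∑ l', γ (Fin.castSucc l') :=
          Finset.sum_congr rfl fun l' _ => hcval l'
        have hsplit : (∑ l', γ (Fin.castSucc l')) + γ (Fin.last d') = s := by
          rw [← hγ, Fin.sum_univ_castSucc]
        omega
      · intro l'
        rw [Fin.lastCases_castSucc]
    have hνeq : gν (a, b) = ν := by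
      apply Finsupp.ext
      intro x
      rcases x with i | j
      · simp [hgν, ha]
      · simp [hgν, hb]
    rw [Finset.mem_coe, hT, Finset.mem_image]
    refine ⟨(c, (a, b)), Finset.mem_univ _, ?_⟩
    show (∏ l, F l ^ gγ c l) * monomial (gν (a, b)) 1 = _
    simp only [hγeq, hνeq]
  have hspan : ∀ ab, monomial (expf ab) (1 : k) ∈ Submodule.span k (T : Set _) := by
    intro ab
    refine Submodule.span_mono hcover ?_
    refine span_claim hn hm F hF N E0 ?_ ?_ hmem s (expf ab) ?_
    · rw [hE0]; exact Nat.mul_le_mul_left _ (by omega)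
    · rw [hE0]; exact Nat.mul_le_mul_left _ (by omega)
    · rw [hwt ab]
  -- the counting
  have hcard := card_le_of_span hli T hspan
  have hcard1 : Fintype.card ((Fin n' → Fin (t + 1)) × (Fin m' → Fin (t' + 1)))
      = (t + 1) ^ n' * (t' + 1) ^ m' := by simp
  have hcard2 : T.card ≤ (s + 1) ^ d' * ((E0 + 1) ^ (n' + 1) * (E0 + 1) ^ (m' + 1)) := by
    calc T.card ≤ Finset.univ.card := Finset.card_image_le
      _ = _ := by simp [Finset.card_univ]
  have hmain : (t + 1) ^ n' * (t' + 1) ^ m'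
      ≤ (s + 1) ^ d' * ((E0 + 1) ^ (n' + 1) * (E0 + 1) ^ (m' + 1)) := by
    rw [← hcard1]
    exact le_trans hcard hcard2
  -- final arithmetic contradiction
  have he1 : e + 1 ≤ (n' + 1) * (t + 1) := by
    have h := Nat.div_add_mod e (n' + 1)
    have h2 : e % (n' + 1) < n' + 1 := Nat.mod_lt _ (by omega)
    calc e + 1 = (n' + 1) * t + e % (n' + 1) + 1 := by rw [← ht] at h; omega
      _ ≤ (n' + 1) * t + (n' + 1) := by omega
      _ = (n' + 1) * (t + 1) := by ring
  have he2 : e + 1 ≤ (m' + 1) * (t' + 1) := by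
    have h := Nat.div_add_mod e (m' + 1)
    have h2 : e % (m' + 1) < m' + 1 := Nat.mod_lt _ (by omega)
    calc e + 1 = (m' + 1) * t' + e % (m' + 1) + 1 := by rw [← ht'] at h; omega
      _ ≤ (m' + 1) * t' + (m' + 1) := by omega
      _ = (m' + 1) * (t' + 1) := by ring
  have hfin : (e + 1) ^ (n' + m') ≤ C * (e + 1) ^ d' := by
    calc (e + 1) ^ (n' + m') = (e + 1) ^ n' * (e + 1) ^ m' := by rw [← pow_add]
      _ ≤ ((n' + 1) * (t + 1)) ^ n' * ((m' + 1) * (t' + 1)) ^ m' :=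
          Nat.mul_le_mul (Nat.pow_le_pow_left he1 _) (Nat.pow_le_pow_left he2 _)
      _ = (n' + 1) ^ n' * (m' + 1) ^ m' * ((t + 1) ^ n' * (t' + 1) ^ m') := by
          rw [mul_pow, mul_pow]; ring
      _ ≤ (n' + 1) ^ n' * (m' + 1) ^ m' *
            ((s + 1) ^ d' * ((E0 + 1) ^ (n' + 1) * (E0 + 1) ^ (m' + 1))) :=
          Nat.mul_le_mul_left _ hmain
      _ = (n' + 1) ^ n' * (m' + 1) ^ m' * (E0 + 1) ^ (n' + m' + 2) * (s + 1) ^ d' := by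
          rw [← pow_add]; ring_nf
      _ = C * (s + 1) ^ d' := by rw [hC]
      _ ≤ C * (e + 1) ^ d' := Nat.mul_le_mul_left _ (Nat.pow_le_pow_left (by omega) _)
  have hsplit : (e + 1) ^ (n' + m') = (e + 1) ^ (n' + m' - 1) * (e + 1) := by
    rw [← pow_succ]
    congr 1
    omega
  have hd'le : d' ≤ n' + m' - 1 := by omega
  have hfin2 : (e + 1) ^ (n' + m' - 1) * (e + 1) ≤ (e + 1) ^ (n' + m' - 1) * C := by
    calc (e + 1) ^ (n' + m' - 1) * (e + 1) = (e + 1) ^ (n' + m') := hsplit.symm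
      _ ≤ C * (e + 1) ^ d' := hfin
      _ ≤ C * (e + 1) ^ (n' + m' - 1) :=
          Nat.mul_le_mul_left _ (Nat.pow_le_pow_right (by omega) hd'le)
      _ = (e + 1) ^ (n' + m' - 1) * C := by ring
  have hcontra : e + 1 ≤ C :=
    Nat.le_of_mul_le_mul_left hfin2 (Nat.pow_pos (by omega))
  rw [he, hs] at hcontra
  omega

end BML

open Module

/-- Hartshorne's Bilinear Map Lemma: a nondegenerate bilinear map of nonzero
finite-dimensional vector spaces over an algebraically closed field satisfies
dim U ≥ dim V + dim W − 1. -/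
theorem stmt_12 (k : Type*) [Field k] [IsAlgClosed k]
    (V W U : Type*) [AddCommGroup V] [Module k V] [AddCommGroup W] [Module k W]
    [AddCommGroup U] [Module k U]
    [FiniteDimensional k V] [FiniteDimensional k W] [FiniteDimensional k U]
    [Nontrivial V] [Nontrivial W]
    (φ : V →ₗ[k] W →ₗ[k] U)
    (hnd : ∀ v w, φ v w = 0 → v = 0 ∨ w = 0) :
    finrank k V + finrank k W - 1 ≤ finrank k U := by
  classical
  have hnpos : 0 < finrank k V := finrank_pos
  have hmpos : 0 < finrank k W := finrank_pos
  rcases Nat.eq_zero_or_pos (finrank k U) with hd0 | hdpos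
  · exfalso
    obtain ⟨v, hv⟩ := exists_ne (0 : V)
    obtain ⟨w, hw⟩ := exists_ne (0 : W)
    have h0 : φ v w = 0 := by
      have := finrank_zero_iff_forall_zero.mp hd0
      exact this _
    rcases hnd v w h0 with h | h
    · exact hv h
    · exact hw h
  set n := finrank k V with hn
  set m := finrank k W with hm
  set d := finrank k U with hd
  let bV := finBasis k V
  let bW := finBasis k W
  let bU := finBasis k U
  set F : Fin d → MvPolynomial (Fin n ⊕ Fin m) k := fun l =>
    ∑ i, ∑ j, MvPolynomial.C (bU.coord l (φ (bV i) (bW j))) *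
      (MvPolynomial.X (Sum.inl i) * MvPolynomial.X (Sum.inr j)) with hF
  have hterm : ∀ (i : Fin n) (j : Fin m) (c : k),
      MvPolynomial.C c * (MvPolynomial.X (Sum.inl i) * MvPolynomial.X (Sum.inr j))
        = monomial (Finsupp.single (Sum.inl i : Fin n ⊕ Fin m) 1
            + Finsupp.single (Sum.inr j : Fin n ⊕ Fin m) 1) c := by
    intro i j c
    rw [MvPolynomial.X, MvPolynomial.X, monomial_mul, one_mul, C_mul_monomial, mul_one]
  have hwt_single : ∀ (i : Fin n) (j : Fin m),
      weight (BML.wt n m) (Finsupp.single (Sum.inl i : Fin n ⊕ Fin m) 1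
        + Finsupp.single (Sum.inr j : Fin n ⊕ Fin m) 1) = (1, 1) := by
    intro i j
    rw [map_add]
    rw [weight_apply, weight_apply]
    rw [Finsupp.sum_single_index (by simp), Finsupp.sum_single_index (by simp)]
    simp [BML.wt, Prod.ext_iff]
  have hFhom : ∀ l, (F l).IsWeightedHomogeneous (BML.wt n m) (1, 1) := by
    intro l
    rw [hF]
    apply IsWeightedHomogeneous.sum
    intro i _
    apply IsWeightedHomogeneous.sum
    intro j _
    rw [hterm]
    exact isWeightedHomogeneous_monomial _ _ _ (hwt_single i j)
  have heval : ∀ (p : Fin n ⊕ Fin m → k) (l : Fin d),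
      MvPolynomial.eval p (F l)
        = bU.coord l (φ (∑ i, p (Sum.inl i) • bV i) (∑ j, p (Sum.inr j) • bW j)) := by
    intro p l
    have h1 : φ (∑ i, p (Sum.inl i) • bV i) (∑ j, p (Sum.inr j) • bW j)
        = ∑ i, ∑ j, (p (Sum.inl i) * p (Sum.inr j)) • φ (bV i) (bW j) := by
      have ha : φ (∑ i, p (Sum.inl i) • bV i) = ∑ i, p (Sum.inl i) • φ (bV i) := by
        rw [map_sum]
        exact Finset.sum_congr rfl fun i _ => φ.map_smul _ _
      rw [ha, LinearMap.sum_apply]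
      refine Finset.sum_congr rfl fun i _ => ?_
      rw [LinearMap.smul_apply, map_sum, Finset.smul_sum]
      refine Finset.sum_congr rfl fun j _ => ?_
      rw [map_smul, smul_smul]
    rw [h1, map_sum]
    simp only [map_sum, map_smul, smul_eq_mul]
    simp only [hF, map_sum, eval_mul, eval_C, eval_X]
    exact Finset.sum_congr rfl fun i _ => Finset.sum_congr rfl fun j _ => by ring
  have hrad : ∀ (i : Fin n) (j : Fin m),
      MvPolynomial.X (Sum.inl i) * MvPolynomial.X (Sum.inr j)
        ∈ (Ideal.span (Set.range F)).radical := by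
    intro i j
    rw [← vanishingIdeal_zeroLocus_eq_radical (K := k)]
    rw [mem_vanishingIdeal_iff]
    intro p hp
    rw [mem_zeroLocus_iff] at hp
    set v := ∑ i', p (Sum.inl i') • bV i' with hv
    set w := ∑ j', p (Sum.inr j') • bW j' with hw
    have hφ0 : φ v w = 0 := by
      rw [← bU.forall_coord_eq_zero_iff]
      intro l
      rw [← heval p l]
      exact hp _ (Ideal.subset_span ⟨l, rfl⟩)
    have hor := hnd v w hφ0
    show MvPolynomial.eval p _ = 0
    rw [eval_mul, eval_X, eval_X]
    rcases hor with h0 | h0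
    · have := bV.repr_sum_self (fun i' => p (Sum.inl i'))
      rw [← hv, h0, map_zero] at this
      have hz : p (Sum.inl i) = 0 := by
        have := congrFun this i
        simpa using this.symm
      rw [hz, zero_mul]
    · have := bW.repr_sum_self (fun j' => p (Sum.inr j'))
      rw [← hw, h0, map_zero] at this
      have hz : p (Sum.inr j) = 0 := by
        have := congrFun this j
        simpa using this.symm
      rw [hz, mul_zero]
  have hradN : ∀ (i : Fin n) (j : Fin m), ∃ N,
      (MvPolynomial.X (Sum.inl i) * MvPolynomial.X (Sum.inr j)) ^ N
        ∈ Ideal.span (Set.range F) :=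
    fun i j => Ideal.mem_radical_iff.mp (hrad i j)
  choose Nf hNf using hradN
  set N := Finset.univ.sup (fun ij : Fin n × Fin m => Nf ij.1 ij.2) with hN
  have hmem : ∀ (i : Fin n) (j : Fin m),
      (MvPolynomial.X (Sum.inl i) * MvPolynomial.X (Sum.inr j)) ^ N
        ∈ Ideal.span (Set.range F) := by
    intro i j
    have hle : Nf i j ≤ N := Finset.le_sup (f := fun ij : Fin n × Fin m => Nf ij.1 ij.2)
      (Finset.mem_univ (i, j))
    have hsplit : ((MvPolynomial.X (Sum.inl i) * MvPolynomial.X (Sum.inr j) :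
          MvPolynomial (Fin n ⊕ Fin m) k)) ^ N
        = (MvPolynomial.X (Sum.inl i) * MvPolynomial.X (Sum.inr j)) ^ (Nf i j)
          * (MvPolynomial.X (Sum.inl i) * MvPolynomial.X (Sum.inr j)) ^ (N - Nf i j) := by
      rw [← pow_add]
      congr 1
      omega
    rw [hsplit]
    exact Ideal.mul_mem_right _ _ (hNf i j)
  exact BML.core hnpos hmpos hdpos F hFhom N hmem
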